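/- Let T ⊂ {(r,z) ∈ ℝ² : r ≥ 0} be a triangle with edges E₁, E₂, E₃ and fixed unit normals n_{E₁}, n_{E₂}, n_{E₃}. For each edge E define the local basis function ψ_E := ψ_E^R (the modified Raviart–Thomas function with respect to the on-axis endpoint) if exactly one endpoint of E lies on the axis {r = 0}, and ψ_E := ψ_E^{RT0} otherwise. Then the 3×3 matrix M with entries M_{a,b} := ∫_{E_b} ψ_{E_a} · n_{E_b} ds is diagonal with diagonal entries ±1. In particular, the three functions ψ_{E₁}, ψ_{E₂}, ψ_{E₃} are linearly independent and the edge-flux functionals q ↦ ∫_{E_b} q · n_{E_b} ds form a dual basis (up to signs) of their span. -/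
import Mathlib


open MeasureTheory
open scoped Classical

noncomputable section

/-- The two-dimensional `curl` of a scalar function: `curl f = (∂_z f, −∂_r f)`. -/
def curl2 (f : ℝ × ℝ → ℝ) (p : ℝ × ℝ) : ℝ × ℝ :=
  (fderiv ℝ f p (0, 1), -(fderiv ℝ f p (1, 0)))

/-- The Euclidean dot product on `ℝ²`. -/
def dot2 (a b : ℝ × ℝ) : ℝ := a.1 * b.1 + a.2 * b.2

/-- The arclength integral `∫_{[A,B]} f ds` over the segment from `A` to `B`. -/
def lineIntegral (f : ℝ × ℝ → ℝ) (A B : ℝ × ℝ) : ℝ :=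
  Real.sqrt (dot2 (B - A) (B - A)) * ∫ t in (0:ℝ)..1, f (A + t • (B - A))

/-- The local basis function of the edge `E = [N_a, N_b]` (with barycentric coordinates
`λ_a`, `λ_b` of its endpoints): the modified Raviart–Thomas function `ψ_E^R = 2 curl(λ_j) λ_i`
if exactly one endpoint `N_j` of `E` lies on the axis `{r = 0}`, and the standard
Raviart–Thomas function `ψ_E^{RT0} = curl(λ_a) λ_b − curl(λ_b) λ_a` otherwise. -/
def psiE (la lb : (ℝ × ℝ) →ᵃ[ℝ] ℝ) (Na Nb : ℝ × ℝ) : ℝ × ℝ → ℝ × ℝ :=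
  if Na.1 = 0 ∧ Nb.1 ≠ 0 then fun p => (2 * lb p) • curl2 (fun q => la q) p
  else if Nb.1 = 0 ∧ Na.1 ≠ 0 then fun p => (2 * la p) • curl2 (fun q => lb q) p
  else fun p => (lb p) • curl2 (fun q => la q) p - (la p) • curl2 (fun q => lb q) p

lemma dot2_smul (x : ℝ) (u v : ℝ × ℝ) : dot2 (x • u) v = x * dot2 u v := by
  simp [dot2, Prod.smul_fst, Prod.smul_snd, smul_eq_mul]; ring

lemma dot2_sub (u v w : ℝ × ℝ) : dot2 (u - v) w = dot2 u w - dot2 v w := by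
  simp [dot2]; ring

lemma dot2_add (u v w : ℝ × ℝ) : dot2 (u + v) w = dot2 u w + dot2 v w := by
  simp [dot2]; ring

lemma affine_fderiv (l : (ℝ × ℝ) →ᵃ[ℝ] ℝ) (p v : ℝ × ℝ) :
    fderiv ℝ (fun q => l q) p v = l.linear v := by
  have h : (fun q : ℝ × ℝ => l q) = fun q => l.linear q + l 0 := by
    funext q
    have := l.map_vadd (0 : ℝ × ℝ) q
    simpa using this
  have hF : HasFDerivAt (fun q : ℝ × ℝ => l.linear q + l 0)
      (LinearMap.toContinuousLinearMap l.linear) p :=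
    (LinearMap.toContinuousLinearMap l.linear).hasFDerivAt.add_const (l 0)
  rw [h, hF.fderiv]
  simp

lemma dot2_curl (l : (ℝ × ℝ) →ᵃ[ℝ] ℝ) (p v : ℝ × ℝ) :
    dot2 (curl2 (fun q => l q) p) v = l.linear (-v.2, v.1) := by
  have h : ((-v.2, v.1) : ℝ × ℝ) = (-v.2) • ((1:ℝ), (0:ℝ)) + v.1 • ((0:ℝ), (1:ℝ)) := by
    simp [Prod.ext_iff]
  rw [h, map_add, _root_.map_smul, _root_.map_smul]
  simp [curl2, affine_fderiv, dot2, smul_eq_mul]; ring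

lemma affine_line (l : (ℝ × ℝ) →ᵃ[ℝ] ℝ) (A d : ℝ × ℝ) (t : ℝ) :
    l (A + t • d) = l A + t * l.linear d := by
  have h := l.map_vadd A (t • d)
  simp only [vadd_eq_add, _root_.map_smul, smul_eq_mul] at h
  rw [add_comm A (t • d), h]; ring

lemma linear_sub (l : (ℝ × ℝ) →ᵃ[ℝ] ℝ) (X Y : ℝ × ℝ) :
    l.linear (X - Y) = l X - l Y := by
  simpa using l.linearMap_vsub X Y

lemma psiE_case1 (la lb : (ℝ × ℝ) →ᵃ[ℝ] ℝ) (Na Nb : ℝ × ℝ)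
    (h : Na.1 = 0 ∧ Nb.1 ≠ 0) (p : ℝ × ℝ) :
    psiE la lb Na Nb p = (2 * lb p) • curl2 (fun q => la q) p := by
  simp only [psiE, if_pos h]

lemma psiE_case2 (la lb : (ℝ × ℝ) →ᵃ[ℝ] ℝ) (Na Nb : ℝ × ℝ)
    (h1 : ¬(Na.1 = 0 ∧ Nb.1 ≠ 0)) (h2 : Nb.1 = 0 ∧ Na.1 ≠ 0) (p : ℝ × ℝ) :
    psiE la lb Na Nb p = (2 * la p) • curl2 (fun q => lb q) p := by
  simp only [psiE, if_neg h1, if_pos h2]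

lemma psiE_case3 (la lb : (ℝ × ℝ) →ᵃ[ℝ] ℝ) (Na Nb : ℝ × ℝ)
    (h1 : ¬(Na.1 = 0 ∧ Nb.1 ≠ 0)) (h2 : ¬(Nb.1 = 0 ∧ Na.1 ≠ 0)) (p : ℝ × ℝ) :
    psiE la lb Na Nb p = (lb p) • curl2 (fun q => la q) p - (la p) • curl2 (fun q => lb q) p := by
  simp only [psiE, if_neg h1, if_neg h2]

lemma int_affine (u v : ℝ) : ∫ t in (0:ℝ)..1, (u + v * t) = u + v / 2 := by
  rw [intervalIntegral.integral_add intervalIntegrable_const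
      (intervalIntegral.intervalIntegrable_id.const_mul v),
      intervalIntegral.integral_const_mul, integral_id]
  norm_num
  ring
/-- For a triangle in the half plane `{r ≥ 0}` with edges `E_a = [N_{a+1}, N_{a+2}]` and
fixed unit normals `n_a`, the matrix `M_{a,b} = ∫_{E_b} ψ_{E_a} · n_{E_b} ds` of edge
fluxes of the local (modified) Raviart–Thomas basis functions is diagonal with diagonal
entries `±1`; in particular the three basis functions are linearly independent. -/
theorem modified_basis_flux_matrix_diagonal
    (N : Fin 3 → ℝ × ℝ) (hind : AffineIndependent ℝ N)
    (l : Fin 3 → (ℝ × ℝ) →ᵃ[ℝ] ℝ)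
    (hl : ∀ a b : Fin 3, l a (N b) = if a = b then 1 else 0)
    (hax : ∀ a, 0 ≤ (N a).1)
    (n : Fin 3 → ℝ × ℝ)
    (hperp : ∀ a, dot2 (n a) (N (a + 2) - N (a + 1)) = 0)
    (hunit : ∀ a, dot2 (n a) (n a) = 1) :
    let psi : Fin 3 → ℝ × ℝ → ℝ × ℝ :=
      fun a => psiE (l (a + 1)) (l (a + 2)) (N (a + 1)) (N (a + 2));
    let M : Fin 3 → Fin 3 → ℝ :=
      fun a b => lineIntegral (fun p => dot2 (psi a p) (n b)) (N (b + 1)) (N (b + 2));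
    (∀ a b, a ≠ b → M a b = 0) ∧ (∀ a, M a a = 1 ∨ M a a = -1) ∧
      LinearIndependent ℝ psi := by
  intro psi M
  have e11 : ∀ x : Fin 3, x + 1 + 1 = x + 2 := by decide
  have e12 : ∀ x : Fin 3, x + 1 + 2 = x := by decide
  have e21 : ∀ x : Fin 3, x + 2 + 1 = x := by decide
  have e22 : ∀ x : Fin 3, x + 2 + 2 = x + 1 := by decide
  have ne12 : ∀ x : Fin 3, x + 1 ≠ x + 2 := by decide
  have ne21 : ∀ x : Fin 3, x + 2 ≠ x + 1 := by decide
  have ne10 : ∀ x : Fin 3, x + 1 ≠ x := by decide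
  have ne20 : ∀ x : Fin 3, x + 2 ≠ x := by decide
  have hcase : ∀ x y : Fin 3, x ≠ y → y = x + 1 ∨ y = x + 2 := by decide
  have main : ∀ b : Fin 3, ∃ k : ℝ, k ≠ 0 ∧
      Real.sqrt (dot2 (N (b+2) - N (b+1)) (N (b+2) - N (b+1))) = |k| ∧
      ∀ a : Fin 3, ∃ u v : ℝ,
        (∀ t : ℝ, dot2 (psiE (l (a+1)) (l (a+2)) (N (a+1)) (N (a+2))
            (N (b+1) + t • (N (b+2) - N (b+1)))) (n b) = u + v * t) ∧
        (a = b → u + v / 2 = 1 / k ∨ u + v / 2 = -(1 / k)) ∧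
        (a ≠ b → u = 0 ∧ v = 0) := by
    intro b
    set A := N (b+1) with hA
    set d := N (b+2) - A with hd
    set k := (n b).1 * d.2 - (n b).2 * d.1 with hk
    have hu : (n b).1 * (n b).1 + (n b).2 * (n b).2 = 1 := hunit b
    have hp : (n b).1 * d.1 + (n b).2 * d.2 = 0 := by
      have hp0 := hperp b
      rw [← hA, ← hd] at hp0
      exact hp0
    have hk1 : k * (-(n b).2) = d.1 := by
      rw [hk]; linear_combination d.1 * hu - (n b).1 * hp
    have hk2 : k * (n b).1 = d.2 := by
      rw [hk]; linear_combination d.2 * hu - (n b).2 * hp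
    have hNe : N (b+2) ≠ A := by
      rw [hA]; exact fun h => ne21 b (hind.injective h)
    have hd0 : d ≠ 0 := by rw [hd]; exact sub_ne_zero.mpr hNe
    have hkne : k ≠ 0 := by
      intro h0
      apply hd0
      have h1 : d.1 = 0 := by rw [← hk1, h0]; ring
      have h2 : d.2 = 0 := by rw [← hk2, h0]; ring
      exact Prod.ext_iff.mpr ⟨by simpa using h1, by simpa using h2⟩
    have hdd : dot2 d d = k ^ 2 := by
      show d.1 * d.1 + d.2 * d.2 = k ^ 2
      linear_combination (-(k * (-(n b).2) + d.1)) * hk1 - (k * (n b).1 + d.2) * hk2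
        + k ^ 2 * hu
    refine ⟨k, hkne, ?_, ?_⟩
    · rw [hdd, Real.sqrt_sq_eq_abs]
    · intro a
      have hrot : ∀ (m : (ℝ × ℝ) →ᵃ[ℝ] ℝ) (p : ℝ × ℝ),
          dot2 (curl2 (fun q => m q) p) (n b) = m.linear d / k := by
        intro m p
        rw [dot2_curl]
        have hdk : d = k • ((-(n b).2, (n b).1) : ℝ × ℝ) := by
          refine Prod.ext_iff.mpr ⟨?_, ?_⟩
          · simpa using hk1.symm
          · simpa using hk2.symm
        have h2 : m.linear d = k * m.linear (-(n b).2, (n b).1) := by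
          rw [hdk, _root_.map_smul, smul_eq_mul]
        rw [eq_div_iff hkne]
        linarith [h2]
      have hline : ∀ (c : Fin 3) (t : ℝ), l c (A + t • d) = l c A + t * (l c).linear d :=
        fun c t => affine_line (l c) A d t
      have hlinv : ∀ c : Fin 3, (l c).linear d = l c (N (b+2)) - l c A := by
        intro c; rw [hd]; exact linear_sub (l c) _ _
      by_cases hab : a = b
      · have hA1 : l (a+1) A = 1 := by rw [hA, hab, hl, if_pos rfl]
        have hA2 : l (a+2) A = 0 := by rw [hA, hab, hl, if_neg (ne21 b)]
        have hB1 : l (a+1) (N (b+2)) = 0 := by rw [hab, hl, if_neg (ne12 b)]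
        have hB2 : l (a+2) (N (b+2)) = 1 := by rw [hab, hl, if_pos rfl]
        have hl1 : (l (a+1)).linear d = -1 := by rw [hlinv, hB1, hA1]; ring
        have hl2 : (l (a+2)).linear d = 1 := by rw [hlinv, hB2, hA2]; ring
        by_cases hc1 : (N (a+1)).1 = 0 ∧ (N (a+2)).1 ≠ 0
        · refine ⟨0, -(2 / k), ?_, fun _ => Or.inr (by ring), fun h => absurd hab h⟩
          intro t
          rw [psiE_case1 _ _ _ _ hc1, dot2_smul, hrot, hl1, hline, hA2, hl2]
          ring
        · by_cases hc2 : (N (a+2)).1 = 0 ∧ (N (a+1)).1 ≠ 0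
          · refine ⟨2 / k, -(2 / k), ?_, fun _ => Or.inl (by ring), fun h => absurd hab h⟩
            intro t
            rw [psiE_case2 _ _ _ _ hc1 hc2, dot2_smul, hrot, hl2, hline, hA1, hl1]
            ring
          · refine ⟨-(1 / k), 0, ?_, fun _ => Or.inr (by ring), fun h => absurd hab h⟩
            intro t
            rw [psiE_case3 _ _ _ _ hc1 hc2, dot2_sub, dot2_smul, dot2_smul, hrot, hrot,
              hline, hline, hA1, hA2, hl1, hl2]
            ring
      · rcases hcase a b hab with hb | hb
        · have hz1 : l (a+1) A = 0 := by rw [hA, hb, e11 a, hl, if_neg (ne12 a)]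
          have hz2 : l (a+1) (N (b+2)) = 0 := by rw [hb, e12 a, hl, if_neg (ne10 a)]
          have hlz : (l (a+1)).linear d = 0 := by rw [hlinv, hz2, hz1]; ring
          have hLz : ∀ t : ℝ, l (a+1) (A + t • d) = 0 := by
            intro t; rw [hline, hz1, hlz]; ring
          refine ⟨0, 0, ?_, fun h => absurd h hab, fun _ => ⟨rfl, rfl⟩⟩
          intro t
          by_cases hc1 : (N (a+1)).1 = 0 ∧ (N (a+2)).1 ≠ 0
          · rw [psiE_case1 _ _ _ _ hc1, dot2_smul, hrot, hlz]; ring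
          · by_cases hc2 : (N (a+2)).1 = 0 ∧ (N (a+1)).1 ≠ 0
            · rw [psiE_case2 _ _ _ _ hc1 hc2, dot2_smul, hrot, hLz]; ring
            · rw [psiE_case3 _ _ _ _ hc1 hc2, dot2_sub, dot2_smul, dot2_smul, hrot, hrot,
                hlz, hLz]; ring
        · have hz1 : l (a+2) A = 0 := by rw [hA, hb, e21 a, hl, if_neg (ne20 a)]
          have hz2 : l (a+2) (N (b+2)) = 0 := by rw [hb, e22 a, hl, if_neg (ne21 a)]
          have hlz : (l (a+2)).linear d = 0 := by rw [hlinv, hz2, hz1]; ring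
          have hLz : ∀ t : ℝ, l (a+2) (A + t • d) = 0 := by
            intro t; rw [hline, hz1, hlz]; ring
          refine ⟨0, 0, ?_, fun h => absurd h hab, fun _ => ⟨rfl, rfl⟩⟩
          intro t
          by_cases hc1 : (N (a+1)).1 = 0 ∧ (N (a+2)).1 ≠ 0
          · rw [psiE_case1 _ _ _ _ hc1, dot2_smul, hrot, hLz]; ring
          · by_cases hc2 : (N (a+2)).1 = 0 ∧ (N (a+1)).1 ≠ 0
            · rw [psiE_case2 _ _ _ _ hc1 hc2, dot2_smul, hrot, hlz]; ring
            · rw [psiE_case3 _ _ _ _ hc1 hc2, dot2_sub, dot2_smul, dot2_smul, hrot, hrot,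
                hLz, hlz]; ring
  refine ⟨?_, ?_, ?_⟩
  · intro a b hab
    obtain ⟨k, hkne, hsq, h⟩ := main b
    obtain ⟨u, v, hfun, _, hne⟩ := h a
    obtain ⟨hu0, hv0⟩ := hne hab
    have hM : M a b = Real.sqrt (dot2 (N (b+2) - N (b+1)) (N (b+2) - N (b+1))) *
        ∫ t in (0:ℝ)..1, dot2 (psiE (l (a+1)) (l (a+2)) (N (a+1)) (N (a+2))
          (N (b+1) + t • (N (b+2) - N (b+1)))) (n b) := rfl
    rw [hM]
    simp only [hfun]
    rw [int_affine, hu0, hv0]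
    norm_num
  · intro a
    obtain ⟨k, hkne, hsq, h⟩ := main a
    obtain ⟨u, v, hfun, hdiag, _⟩ := h a
    have hM : M a a = Real.sqrt (dot2 (N (a+2) - N (a+1)) (N (a+2) - N (a+1))) *
        ∫ t in (0:ℝ)..1, dot2 (psiE (l (a+1)) (l (a+2)) (N (a+1)) (N (a+2))
          (N (a+1) + t • (N (a+2) - N (a+1)))) (n a) := rfl
    rw [hM]
    simp only [hfun]
    rw [int_affine, hsq]
    rcases hdiag rfl with h1 | h1 <;> rw [h1] <;> rcases hkne.lt_or_gt with hk | hk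
    · right; rw [abs_of_neg hk]; field_simp
    · left; rw [abs_of_pos hk]; field_simp
    · left; rw [abs_of_neg hk]; field_simp
    · right; rw [abs_of_pos hk]; field_simp
  · rw [Fintype.linearIndependent_iff]
    intro g hg b
    obtain ⟨k, hkne, _, h⟩ := main b
    set p₀ : ℝ × ℝ := N (b+1) + (1/2 : ℝ) • (N (b+2) - N (b+1)) with hp₀
    have key : ∀ i : Fin 3, i ≠ b → dot2 (psi i p₀) (n b) = 0 := by
      intro i hib
      obtain ⟨u, v, hfun, _, hne⟩ := h i
      obtain ⟨hu0, hv0⟩ := hne hib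
      have hh := hfun (1/2)
      rw [hu0, hv0] at hh
      have hpsi : psi i p₀ = psiE (l (i+1)) (l (i+2)) (N (i+1)) (N (i+2)) p₀ := rfl
      rw [hpsi, hp₀]
      simpa using hh
    obtain ⟨u, v, hfun, hdiag, _⟩ := h b
    have hbb : dot2 (psi b p₀) (n b) = u + v / 2 := by
      have hpsi : psi b p₀ = psiE (l (b+1)) (l (b+2)) (N (b+1)) (N (b+2)) p₀ := rfl
      rw [hpsi, hp₀, hfun (1/2)]
      ring
    have hzero : dot2 ((∑ i : Fin 3, g i • psi i) p₀) (n b) = 0 := by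
      rw [hg]; simp [dot2]
    have hexp : dot2 ((∑ i : Fin 3, g i • psi i) p₀) (n b)
        = ∑ i : Fin 3, g i * dot2 (psi i p₀) (n b) := by
      rw [Finset.sum_apply]
      simp only [Pi.smul_apply]
      rw [Fin.sum_univ_three, Fin.sum_univ_three, dot2_add, dot2_add,
        dot2_smul, dot2_smul, dot2_smul]
    have hsum : ∑ i : Fin 3, g i * dot2 (psi i p₀) (n b) = g b * (u + v / 2) := by
      have hs := Finset.sum_eq_single (s := Finset.univ)
        (f := fun i => g i * dot2 (psi i p₀) (n b)) b
        (fun i _ hib => by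
          show g i * dot2 (psi i p₀) (n b) = 0
          rw [key i hib]; ring)
        (fun hb' => absurd (Finset.mem_univ b) hb')
      beta_reduce at hs
      rw [hs, hbb]
    have hg0 : g b * (u + v / 2) = 0 := by rw [← hsum, ← hexp, hzero]
    rcases hdiag rfl with h1 | h1 <;> rw [h1] at hg0
    · rcases mul_eq_zero.mp hg0 with h' | h'
      · exact h'
      · exact absurd h' (one_div_ne_zero hkne)
    · rcases mul_eq_zero.mp hg0 with h' | h'
      · exact h'
      · exact absurd h' (neg_ne_zero.mpr (one_div_ne_zero hkne))
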